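/- For a finite Coxeter system (W,S) and J ⊆ S with longest element w_J of W_J, and for u, v in the set ᴶW of minimal length coset representatives: u ≤ v in Bruhat order if and only if w_J u ≤ w_J v in Bruhat order. -/

import Mathlib

open scoped Classical

variable {B W : Type*} [Group W] {M : CoxeterMatrix B}

/-- `ᴶW`: the minimal length right coset representatives of `W_J` in `W`,
characterized by `ℓ(s w) > ℓ(w)` for all `s ∈ J`. -/
def cosetReps (cs : CoxeterSystem M W) (J : Set B) : Set W :=
  {w | ∀ i ∈ J, cs.length w < cs.length (cs.simple i * w)}

/-- The Bruhat order on a Coxeter group, via the subword property: `x ≤ y` iff some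
reduced word for `y` contains a (scattered) subword which is a reduced word for `x`. -/
def bruhatLE (cs : CoxeterSystem M W) (x y : W) : Prop :=
  ∃ ω : List B, cs.IsReduced ω ∧ cs.wordProd ω = y ∧
    ∃ ω' : List B, ω'.Sublist ω ∧ cs.IsReduced ω' ∧ cs.wordProd ω' = x

open List CoxeterSystem


section Dihedral

variable {G : Type*} [Group G]

private lemma dih_binv {b : G} (hb : b * b = 1) : b⁻¹ = b :=
  inv_eq_of_mul_eq_one_right hb

private lemma dih_qinv {a b : G} (ha : a * a = 1) (hb : b * b = 1) : (a * b)⁻¹ = b * a := by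
  rw [mul_inv_rev, dih_binv hb, dih_binv ha]

private lemma dih_bq {a b : G} (ha : a * a = 1) (hb : b * b = 1) (d : ℕ) :
    b * (a * b) ^ d = ((a * b) ^ d)⁻¹ * b := by
  have key : b * (a * b) ^ d * b⁻¹ = ((a * b) ^ d)⁻¹ := by
    rw [← conj_pow, ← inv_pow]
    congr 1
    rw [dih_binv hb, dih_qinv ha hb]
    calc b * (a * b) * b = b * a * (b * b) := by group
      _ = b * a := by rw [hb, mul_one]
  calc b * (a * b) ^ d = (b * (a * b) ^ d * b⁻¹) * b := by group
    _ = ((a * b) ^ d)⁻¹ * b := by rw [key]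

/-- The key dihedral computation. -/
private lemma dih_core {a b : G} (ha : a * a = 1) (hb : b * b = 1) (n : ℕ) :
    ((if Even n then 1 else b) * (a * b) ^ (n / 2))⁻¹ * (if Even n then b else a)
      * ((if Even n then 1 else b) * (a * b) ^ (n / 2)) = ((a * b) ^ n)⁻¹ * b := by
  rcases Nat.even_or_odd n with he | ho
  · obtain ⟨d, rfl⟩ := he
    have h2 : (d + d) / 2 = d := by omega
    simp only [if_pos (Even.add_self d), h2, one_mul]
    calc ((a * b) ^ d)⁻¹ * b * (a * b) ^ d
        = ((a * b) ^ d)⁻¹ * (b * (a * b) ^ d) := by group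
      _ = ((a * b) ^ d)⁻¹ * (((a * b) ^ d)⁻¹ * b) := by rw [dih_bq ha hb]
      _ = ((a * b) ^ (d + d))⁻¹ * b := by rw [pow_add]; group
  · obtain ⟨d, rfl⟩ := ho
    have hne : ¬ Even (2 * d + 1) := by simp [parity_simps]
    have h2 : (2 * d + 1) / 2 = d := by omega
    simp only [if_neg hne, h2]
    calc (b * (a * b) ^ d)⁻¹ * a * (b * (a * b) ^ d)
        = ((a * b) ^ d)⁻¹ * (b⁻¹ * a * b) * (a * b) ^ d := by group
      _ = ((a * b) ^ d)⁻¹ * ((a * b)⁻¹ * (b * (a * b) ^ d)) := by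
          rw [dih_binv hb, dih_qinv ha hb]; group
      _ = ((a * b) ^ d)⁻¹ * ((a * b)⁻¹ * (((a * b) ^ d)⁻¹ * b)) := by rw [dih_bq ha hb]
      _ = ((a * b) ^ (2 * d + 1))⁻¹ * b := by
          rw [(by ring : 2 * d + 1 = d + 1 + d), pow_add, pow_succ]
          group

end Dihedral

section AltWord

variable {B : Type*}

private lemma alt_drop (i j : B) : ∀ (d n : ℕ),
    (alternatingWord i j n).drop d = alternatingWord i j (n - d) := by
  intro d
  induction d with
  | zero => simp
  | succ d ih =>
    intro n
    match n with
    | 0 => simp [alternatingWord]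
    | n + 1 =>
      rw [alternatingWord_succ' i j n, List.drop_succ_cons, ih n]
      congr 1
      omega

private lemma alt_get? (i j : B) : ∀ (n k : ℕ), k < n →
    (alternatingWord i j n)[k]? = some (if Even (n - k) then i else j) := by
  intro n
  induction n with
  | zero => omega
  | succ n ih =>
    intro k hk
    rw [alternatingWord_succ' i j n]
    match k with
    | 0 =>
      simp only [List.getElem?_cons_zero, Nat.sub_zero]
      congr 1
      rcases Nat.even_or_odd n with he | ho
      · rw [if_pos he, if_neg (by simp [Nat.even_add_one, he])]
      · rw [if_neg (Nat.not_even_iff_odd.mpr ho),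
          if_pos (Nat.even_add_one.mpr (Nat.not_even_iff_odd.mpr ho))]
    | k + 1 =>
      rw [List.getElem?_cons_succ, ih k (by omega), Nat.succ_sub_succ]

private lemma alt_prod_map {G : Type*} [Monoid G] (i j : B) (f : B → G) : ∀ m : ℕ,
    ((alternatingWord i j (2 * m)).map f).prod = (f i * f j) ^ m := by
  intro m
  induction m with
  | zero => simp [alternatingWord]
  | succ m ih =>
    have h : 2 * (m + 1) = (2 * m + 1) + 1 := by ring
    rw [h, alternatingWord_succ' i j, alternatingWord_succ' i j]
    rw [if_neg (by simp [parity_simps]), if_pos (even_two_mul m)]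
    simp only [List.map_cons, List.prod_cons, ih, ← mul_assoc, pow_succ']

end AltWord

section Parity

variable {B W : Type*} [Group W] {M : CoxeterMatrix B} (cs : CoxeterSystem M W)

private noncomputable def refPermFun (i : B) : W × ZMod 2 → W × ZMod 2 :=
  fun p => (cs.simple i * p.1 * cs.simple i, p.2 + if p.1 = cs.simple i then 1 else 0)

private lemma refPermFun_involutive (i : B) : Function.Involutive (refPermFun cs i) := by
  rintro ⟨t, ε⟩
  unfold refPermFun
  have hss := cs.simple_mul_simple_self i
  have h1 : cs.simple i * (cs.simple i * t * cs.simple i) * cs.simple i = t := by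
    calc cs.simple i * (cs.simple i * t * cs.simple i) * cs.simple i
        = (cs.simple i * cs.simple i) * t * (cs.simple i * cs.simple i) := by group
      _ = t := by rw [hss]; group
  have h2 : (cs.simple i * t * cs.simple i = cs.simple i) ↔ (t = cs.simple i) := by
    constructor
    · intro h
      have := congrArg (fun x => cs.simple i * x * cs.simple i) h
      rw [h1] at this
      rw [this]
      calc cs.simple i * cs.simple i * cs.simple i
          = (cs.simple i * cs.simple i) * cs.simple i := by group
        _ = cs.simple i := by rw [hss]; group
    · rintro rfl
      calc cs.simple i * cs.simple i * cs.simple i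
          = (cs.simple i * cs.simple i) * cs.simple i := by group
        _ = cs.simple i := by rw [hss]; group
  simp only [h1, h2, Prod.mk.injEq]
  refine ⟨trivial, ?_⟩
  rcases em (t = cs.simple i) with h | h
  · rw [if_pos h, add_assoc]
    have : (1 + 1 : ZMod 2) = 0 := by decide
    rw [this, add_zero]
  · rw [if_neg h, add_zero, add_zero]

/-- The involution of `W × ZMod 2` associated to a simple reflection. -/
private noncomputable def refPerm (i : B) : Equiv.Perm (W × ZMod 2) :=
  Function.Involutive.toPerm _ (refPermFun_involutive cs i)

private lemma refPerm_apply (i : B) (t : W) (ε : ZMod 2) :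
    refPerm cs i (t, ε) = (cs.simple i * t * cs.simple i, ε + if t = cs.simple i then 1 else 0) :=
  rfl

private lemma ris_cons (i : B) (ω : List B) :
    cs.rightInvSeq (i :: ω) =
      ((cs.wordProd ω)⁻¹ * cs.simple i * cs.wordProd ω) :: cs.rightInvSeq ω := rfl

private lemma refPerm_word (ω : List B) (t : W) (ε : ZMod 2) :
    ((ω.map (refPerm cs)).prod) (t, ε) =
      (cs.wordProd ω * t * (cs.wordProd ω)⁻¹,
        ε + (List.count t (cs.rightInvSeq ω) : ZMod 2)) := by
  induction ω generalizing t ε with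
  | nil => simp
  | cons i ω ih =>
    rw [List.map_cons, List.prod_cons, Equiv.Perm.mul_apply, ih, refPerm_apply,
      ris_cons, List.count_cons]
    have hcond : (cs.wordProd ω * t * (cs.wordProd ω)⁻¹ = cs.simple i)
        ↔ ((cs.wordProd ω)⁻¹ * cs.simple i * cs.wordProd ω = t) := by
      constructor
      · intro h
        rw [← h]; group
      · intro h
        rw [← h]; group
    rw [cs.wordProd_cons, Prod.mk.injEq]
    constructor
    · rw [mul_inv_rev, cs.inv_simple]
      group
    · rcases em (cs.wordProd ω * t * (cs.wordProd ω)⁻¹ = cs.simple i) with h | h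
      · rw [if_pos h, if_pos (by exact beq_iff_eq.mpr (hcond.mp h))]
        push_cast
        ring
      · rw [if_neg h, if_neg (by simpa using fun hh => h (hcond.mpr hh))]
        push_cast
        ring

private lemma ris_alt_halves (i j : B) (m : ℕ) (hm : (cs.simple i * cs.simple j) ^ m = 1) :
    (cs.rightInvSeq (alternatingWord i j (2 * m))).take m
      = (cs.rightInvSeq (alternatingWord i j (2 * m))).drop m := by
  set ω := alternatingWord i j (2 * m) with hω
  have hlen : ω.length = 2 * m := by simp [hω]
  have hentry : ∀ k, k < 2 * m → (cs.rightInvSeq ω).getD k 1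
      = ((cs.simple i * cs.simple j) ^ (2 * m - k - 1))⁻¹ * cs.simple j := by
    intro k hk
    rw [cs.getD_rightInvSeq, hω, alt_drop, alt_get? i j _ k hk]
    have hdc : 2 * m - (k + 1) = 2 * m - k - 1 := by omega
    rw [hdc]
    set n := 2 * m - k - 1 with hn
    have hnk : 2 * m - k = n + 1 := by omega
    rw [hnk]
    have hlet : (Option.map cs.simple (some (if Even (n + 1) then i else j))).getD 1
        = if Even n then cs.simple j else cs.simple i := by
      rcases Nat.even_or_odd n with he | ho
      · rw [if_pos he, if_neg (by simp [Nat.even_add_one, he]), Option.map_some, Option.getD_some]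
      · rw [if_neg (Nat.not_even_iff_odd.mpr ho),
          if_pos (Nat.even_add_one.mpr (Nat.not_even_iff_odd.mpr ho)),
          Option.map_some, Option.getD_some]
    rw [hlet, cs.prod_alternatingWord_eq_mul_pow]
    exact dih_core (cs.simple_mul_simple_self i) (cs.simple_mul_simple_self j) n
  have hlen' : (cs.rightInvSeq ω).length = 2 * m := by
    rw [cs.length_rightInvSeq, hlen]
  apply List.ext_getElem
  · rw [List.length_take, List.length_drop, hlen']
    omega
  · intro k hk1 hk2
    have hk : k < m := by
      rw [List.length_take, hlen'] at hk1
      omega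
    rw [List.getElem_take, List.getElem_drop]
    rw [← List.getD_eq_getElem _ 1, ← List.getD_eq_getElem _ 1]
    rw [hentry k (by omega), hentry (m + k) (by omega)]
    have : 2 * m - k - 1 = (2 * m - (m + k) - 1) + m := by omega
    rw [this, pow_add, hm, mul_one]

private lemma refPerm_liftable : CoxeterMatrix.IsLiftable M (refPerm cs) := by
  intro i j
  apply Equiv.ext
  rintro ⟨t, ε⟩
  have hprod : (refPerm cs i * refPerm cs j) ^ M i j
      = ((alternatingWord i j (2 * M i j)).map (refPerm cs)).prod :=
    (alt_prod_map i j (refPerm cs) (M i j)).symm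
  rw [hprod, refPerm_word]
  have hπ : cs.wordProd (alternatingWord i j (2 * M i j)) = 1 := by
    rw [cs.prod_alternatingWord_eq_mul_pow, if_pos (even_two_mul _), one_mul]
    have : 2 * M i j / 2 = M i j := by omega
    rw [this, cs.simple_mul_simple_pow]
  have hcount : (List.count t (cs.rightInvSeq (alternatingWord i j (2 * M i j))) : ZMod 2) = 0 := by
    have hsplit := List.take_append_drop (M i j)
      (cs.rightInvSeq (alternatingWord i j (2 * M i j)))
    rw [← hsplit, List.count_append,
      ← ris_alt_halves cs i j (M i j) (cs.simple_mul_simple_pow i j)]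
    push_cast
    exact CharTwo.add_self_eq_zero _
  rw [hπ, hcount]
  simp

end Parity

section Exchange

variable {B W : Type*} [Group W] {M : CoxeterMatrix B} (cs : CoxeterSystem M W)

private noncomputable def refLift : W →* Equiv.Perm (W × ZMod 2) :=
  cs.lift ⟨refPerm cs, refPerm_liftable cs⟩

private lemma refLift_wordProd (ω : List B) :
    refLift cs (cs.wordProd ω) = ((ω.map (refPerm cs)).prod) := by
  unfold CoxeterSystem.wordProd
  rw [map_list_prod]
  congr 1
  rw [List.map_map]
  apply List.map_congr_left
  intro i _
  simp only [Function.comp_apply]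
  exact cs.lift_apply_simple (refPerm_liftable cs) i

/-- Parity of the number of occurrences of `t` in the right inversion sequence of any word
for `w`. -/
private noncomputable def nref (w t : W) : ZMod 2 := ((refLift cs w) (t, 0)).2

private lemma count_ris_cast (ω : List B) (t : W) :
    (List.count t (cs.rightInvSeq ω) : ZMod 2) = nref cs (cs.wordProd ω) t := by
  unfold nref
  rw [refLift_wordProd, refPerm_word]
  simp

private lemma refLift_apply (w t : W) (ε : ZMod 2) :
    refLift cs w (t, ε) = (w * t * w⁻¹, ε + nref cs w t) := by
  obtain ⟨ω, rfl⟩ := cs.wordProd_surjective w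
  rw [refLift_wordProd, refPerm_word, ← count_ris_cast]

private lemma ris_append (α β : List B) :
    cs.rightInvSeq (α ++ β) =
      (cs.rightInvSeq α).map (fun x => (cs.wordProd β)⁻¹ * x * cs.wordProd β)
        ++ cs.rightInvSeq β := by
  induction α with
  | nil => simp
  | cons i α ih =>
    rw [List.cons_append, ris_cons, ris_cons, ih, List.map_cons, List.cons_append]
    congr 1
    rw [cs.wordProd_append]
    group

private lemma count_map_conj (l : List W) (c t : W) :
    List.count t (l.map (fun x => c⁻¹ * x * c)) = List.count (c * t * c⁻¹) l := by
  have hinj : Function.Injective (fun x : W => c⁻¹ * x * c) := by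
    intro x y h
    simp only at h
    have := congrArg (fun z => c * z * c⁻¹) h
    simpa [mul_assoc] using this
  have h2 := List.count_map_of_injective l (fun x : W => c⁻¹ * x * c) hinj (c * t * c⁻¹)
  have h3 : c⁻¹ * (c * t * c⁻¹) * c = t := by group
  rw [h3] at h2
  exact h2

private lemma count_map_conj' (l : List W) (c t : W) :
    List.count t (l.map (fun x => c * x * c⁻¹)) = List.count (c⁻¹ * t * c) l := by
  have h := count_map_conj l c⁻¹ t
  rw [inv_inv] at h
  exact h

private lemma lis_eq_map (ω : List B) :
    cs.leftInvSeq ω = (cs.rightInvSeq ω).map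
      (fun x => cs.wordProd ω * x * (cs.wordProd ω)⁻¹) := by
  induction ω with
  | nil => simp
  | cons i ω ih =>
    rw [ris_cons, List.map_cons]
    show cs.leftInvSeq (i :: ω) = _
    rw [CoxeterSystem.leftInvSeq]
    congr 1
    · rw [cs.wordProd_cons, mul_inv_rev, cs.inv_simple]
      have hss := cs.simple_mul_simple_self i
      calc cs.simple i = cs.simple i * ((cs.wordProd ω) * (cs.wordProd ω)⁻¹)
            * (cs.simple i * cs.simple i) := by rw [mul_inv_cancel, hss]; group
        _ = cs.simple i * cs.wordProd ω * ((cs.wordProd ω)⁻¹ * cs.simple i * cs.wordProd ω)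
            * ((cs.wordProd ω)⁻¹ * cs.simple i) := by group
    · rw [ih, List.map_map]
      apply List.map_congr_left
      intro x _
      simp only [Function.comp_apply, MulAut.conj_apply, cs.wordProd_cons, mul_inv_rev,
        cs.inv_simple]
      group

private lemma nref_self {t : W} (ht : cs.IsReflection t) : nref cs t t = 1 := by
  obtain ⟨w, i, rfl⟩ := ht
  obtain ⟨ω, rfl⟩ := cs.wordProd_surjective w
  set t := cs.wordProd ω * cs.simple i * (cs.wordProd ω)⁻¹ with hT
  have hword : cs.wordProd (ω ++ [i] ++ ω.reverse) = t := by
    rw [cs.wordProd_append, cs.wordProd_append, cs.wordProd_reverse, cs.wordProd_singleton, hT]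
  have key : List.count t (cs.rightInvSeq (ω ++ [i] ++ ω.reverse)) =
      List.count (cs.simple i) (cs.rightInvSeq ω) + 1
        + List.count (cs.simple i) (cs.rightInvSeq ω) := by
    rw [ris_append, List.count_append]
    congr 1
    · -- count in the first two blocks
      rw [count_map_conj, ris_append, List.count_append]
      have e1 : cs.wordProd ω.reverse * t * (cs.wordProd ω.reverse)⁻¹ = cs.simple i := by
        rw [cs.wordProd_reverse, hT]
        group
      rw [e1]
      congr 1
      · rw [count_map_conj]
        congr 1
        rw [cs.wordProd_singleton]
        exact mul_inv_cancel_right _ _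
      · simp [CoxeterSystem.rightInvSeq]
    · -- count in the reversed part
      rw [cs.rightInvSeq_reverse, List.count_reverse, lis_eq_map, count_map_conj']
      congr 1
      rw [hT]
      group
  have := count_ris_cast cs (ω ++ [i] ++ ω.reverse) t
  rw [hword, key] at this
  rw [← this]
  push_cast
  have hrw : (List.count (cs.simple i) (cs.rightInvSeq ω) : ZMod 2) + 1
      + (List.count (cs.simple i) (cs.rightInvSeq ω) : ZMod 2)
      = 1 + ((List.count (cs.simple i) (cs.rightInvSeq ω) : ZMod 2)
        + (List.count (cs.simple i) (cs.rightInvSeq ω) : ZMod 2)) := by ring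
  rw [hrw, CharTwo.add_self_eq_zero, add_zero]

end Exchange

section Exchange2

variable {B W : Type*} [Group W] {M : CoxeterMatrix B} (cs : CoxeterSystem M W)

private lemma nref_mul_refl (w : W) {t : W} (ht : cs.IsReflection t) :
    nref cs (w * t) t = 1 + nref cs w t := by
  have h1 : refLift cs t (t, (0 : ZMod 2)) = (t, 1) := by
    rw [refLift_apply, mul_inv_cancel_right, nref_self cs ht, zero_add]
  have h2 : refLift cs (w * t) (t, (0 : ZMod 2)) = refLift cs w (refLift cs t (t, 0)) := by
    rw [map_mul]
    rfl
  have h3 : refLift cs w (t, (1 : ZMod 2)) = (w * t * w⁻¹, 1 + nref cs w t) := refLift_apply ..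
  show ((refLift cs (w * t)) (t, 0)).2 = _
  rw [h2, h1, h3]

private lemma isRightInversion_iff_nref {t : W} (ht : cs.IsReflection t) (w : W) :
    cs.IsRightInversion w t ↔ nref cs w t = 1 := by
  have half : ∀ v : W, nref cs v t = 1 → cs.IsRightInversion v t := by
    intro v hv
    obtain ⟨ω, hred, rfl⟩ := cs.exists_reduced_word' v
    have hc := count_ris_cast cs ω t
    rw [hv] at hc
    have hnd : (cs.rightInvSeq ω).Nodup := hred.nodup_rightInvSeq
    have hle : List.count t (cs.rightInvSeq ω) ≤ 1 := List.nodup_iff_count_le_one.mp hnd t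
    have hone : List.count t (cs.rightInvSeq ω) = 1 := by
      rcases Nat.le_one_iff_eq_zero_or_eq_one.mp hle with h0 | h1
      · rw [h0] at hc
        simp at hc
      · exact h1
    have hmem : t ∈ cs.rightInvSeq ω := List.count_pos_iff.mp (by omega)
    exact cs.isRightInversion_of_mem_rightInvSeq hred hmem
  constructor
  · intro hw
    by_contra hne
    have h0 : nref cs w t = 0 := by
      have hfin : ∀ x : ZMod 2, x = 0 ∨ x = 1 := by decide
      rcases hfin (nref cs w t) with h | h
      · exact h
      · exact absurd h hne
    have h1 : nref cs (w * t) t = 1 := by rw [nref_mul_refl cs w ht, h0, add_zero]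
    obtain ⟨_, hlt⟩ := half (w * t) h1
    rw [mul_assoc, ht.mul_self, mul_one] at hlt
    obtain ⟨_, hlt'⟩ := hw
    omega
  · exact half w

/-- Strong exchange property, right handed version, for arbitrary words. -/
private lemma strong_exchange_right (ω : List B) {t : W} (ht : cs.IsReflection t)
    (h : cs.length (cs.wordProd ω * t) < cs.length (cs.wordProd ω)) :
    ∃ j < ω.length, cs.wordProd ω * t = cs.wordProd (ω.eraseIdx j) := by
  have h1 : nref cs (cs.wordProd ω) t = 1 := (isRightInversion_iff_nref cs ht _).mp ⟨ht, h⟩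
  have hc := count_ris_cast cs ω t
  rw [h1] at hc
  have hmem : t ∈ cs.rightInvSeq ω := by
    by_contra hmem
    rw [List.count_eq_zero.mpr hmem] at hc
    simp at hc
  obtain ⟨j, hj, hjt⟩ := List.mem_iff_getElem.mp hmem
  rw [cs.length_rightInvSeq] at hj
  refine ⟨j, hj, ?_⟩
  rw [← cs.wordProd_mul_getD_rightInvSeq ω j]
  congr 1
  rw [List.getD_eq_getElem _ 1 (by rw [cs.length_rightInvSeq]; exact hj)]
  exact hjt.symm

/-- Strong exchange property, left handed version, for arbitrary words. -/
private lemma strong_exchange_left (ω : List B) {t : W} (ht : cs.IsReflection t)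
    (h : cs.length (t * cs.wordProd ω) < cs.length (cs.wordProd ω)) :
    ∃ j < ω.length, t * cs.wordProd ω = cs.wordProd (ω.eraseIdx j) := by
  have hrev : cs.length (cs.wordProd ω.reverse * t) < cs.length (cs.wordProd ω.reverse) := by
    rw [cs.wordProd_reverse]
    have e : (cs.wordProd ω)⁻¹ * t = (t * cs.wordProd ω)⁻¹ := by
      rw [mul_inv_rev, ht.inv]
    rw [e, cs.length_inv, cs.length_inv]
    exact h
  have h1 : nref cs (cs.wordProd ω.reverse) t = 1 :=
    (isRightInversion_iff_nref cs ht _).mp ⟨ht, hrev⟩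
  have hc := count_ris_cast cs ω.reverse t
  rw [h1] at hc
  have hmem : t ∈ cs.rightInvSeq ω.reverse := by
    by_contra hmem
    rw [List.count_eq_zero.mpr hmem] at hc
    simp at hc
  rw [cs.rightInvSeq_reverse, List.mem_reverse] at hmem
  obtain ⟨j, hj, hjt⟩ := List.mem_iff_getElem.mp hmem
  rw [cs.length_leftInvSeq] at hj
  refine ⟨j, hj, ?_⟩
  rw [← cs.getD_leftInvSeq_mul_wordProd ω j]
  congr 1
  rw [List.getD_eq_getElem _ 1 (by rw [cs.length_leftInvSeq]; exact hj)]
  exact hjt.symm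

/-- The deletion property. -/
private lemma deletion_aux : ∀ (n : ℕ) (ω : List B), ω.length ≤ n →
    ∃ σ : List B, σ.Sublist ω ∧ cs.IsReduced σ ∧ cs.wordProd σ = cs.wordProd ω := by
  intro n
  induction n with
  | zero =>
    intro ω hω
    have hnil : ω = [] := List.eq_nil_of_length_eq_zero (by omega)
    subst hnil
    exact ⟨[], List.Sublist.refl _, by simp [CoxeterSystem.IsReduced], rfl⟩
  | succ n ih =>
    intro ω hω
    by_cases hred : cs.IsReduced ω
    · exact ⟨ω, List.Sublist.refl ω, hred, rfl⟩
    · have hPex : ∃ k, ¬ cs.IsReduced (ω.take k) := ⟨ω.length, by rwa [List.take_length]⟩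
      have hk := Nat.find_spec hPex
      have hkmin : forall m, m < Nat.find hPex -> ¬ ¬ cs.IsReduced (ω.take m) :=
        fun m hm => Nat.find_min hPex hm
      have hk0 : Nat.find hPex ≠ 0 := by
        intro h0
        rw [h0] at hk
        apply hk
        simp [CoxeterSystem.IsReduced]
      obtain ⟨K, hK⟩ : ∃ K, Nat.find hPex = K + 1 := ⟨Nat.find hPex - 1, by omega⟩
      rw [hK] at hk
      have hKred : cs.IsReduced (ω.take K) := by
        have := hkmin K (by omega)
        exact not_not.mp this
      have hKlt : K < ω.length := by
        by_contra hge
        push_neg at hge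
        rw [List.take_of_length_le hge] at hKred
        exact hred hKred
      have htake : ω.take (K + 1) = ω.take K ++ [ω.get ⟨K, hKlt⟩] := by
        rw [List.take_succ]
        congr 1
        rw [List.getElem?_eq_getElem hKlt]
        rfl
      set iK := ω.get ⟨K, hKlt⟩ with hiK
      set x := cs.wordProd (ω.take K) with hx
      have hlenx : cs.length x = K := by
        have : cs.length x = (ω.take K).length := hKred
        rw [this, List.length_take]
        omega
      have hprod : cs.wordProd (ω.take (K + 1)) = x * cs.simple iK := by
        rw [htake, cs.wordProd_append, cs.wordProd_singleton]
      have hlt : cs.length (x * cs.simple iK) < cs.length x := by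
        have hlen_take : (ω.take (K + 1)).length = K + 1 := by
          rw [List.length_take]
          omega
        have hub : cs.length (x * cs.simple iK) ≤ K + 1 := by
          rw [← hprod]
          calc cs.length (cs.wordProd (ω.take (K + 1))) ≤ (ω.take (K + 1)).length :=
                cs.length_wordProd_le _
            _ = K + 1 := hlen_take
        have hne : cs.length (x * cs.simple iK) ≠ K + 1 := by
          intro he
          apply hk
          show cs.length (cs.wordProd (ω.take (K + 1))) = (ω.take (K + 1)).length
          rw [hprod, he, hlen_take]
        rcases cs.length_mul_simple x iK with hc | hc
        · omega
        · omega
      obtain ⟨j, hj, hex⟩ := strong_exchange_right cs (ω.take K)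
        (cs.isReflection_simple iK) (by exact hlt)
      rw [List.length_take, min_eq_left_of_lt hKlt] at hj
      set ω' := (ω.take K).eraseIdx j ++ ω.drop (K + 1) with hω'
      have hsub : ω'.Sublist ω := by
        have h1 : ((ω.take K).eraseIdx j).Sublist (ω.take K ++ [iK]) :=
          (List.eraseIdx_sublist _ j).trans (List.sublist_append_left _ _)
        have h2 : ω'.Sublist ((ω.take K ++ [iK]) ++ ω.drop (K + 1)) :=
          List.Sublist.append h1 (List.Sublist.refl _)
        rw [← htake, List.take_append_drop] at h2
        exact h2
      have hprod' : cs.wordProd ω' = cs.wordProd ω := by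
        conv_rhs => rw [← List.take_append_drop (K + 1) ω]
        rw [hω', cs.wordProd_append, cs.wordProd_append, ← hex, hprod]
      have hlen' : ω'.length ≤ n := by
        have e1 : ((ω.take K).eraseIdx j).length + 1 = (ω.take K).length :=
          List.length_eraseIdx_add_one (by rw [List.length_take]; omega)
        rw [hω', List.length_append, List.length_drop]
        rw [List.length_take] at e1
        omega
      obtain ⟨σ, hσ1, hσ2, hσ3⟩ := ih ω' hlen'
      exact ⟨σ, hσ1.trans hsub, hσ2, by rw [hσ3, hprod']⟩

private lemma deletion (ω : List B) :
    ∃ σ : List B, σ.Sublist ω ∧ cs.IsReduced σ ∧ cs.wordProd σ = cs.wordProd ω :=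
  deletion_aux cs ω.length ω le_rfl

end Exchange2

section BruhatOrder

variable {B W : Type*} [Group W] {M : CoxeterMatrix B} (cs : CoxeterSystem M W)

private def upStep (x y : W) : Prop :=
  ∃ t, cs.IsReflection t ∧ y = x * t ∧ cs.length x < cs.length y

private def brle : W → W → Prop := Relation.ReflTransGen (upStep cs)

private lemma brle_refl (x : W) : brle cs x x := Relation.ReflTransGen.refl

private lemma brle_trans {x y z : W} (h1 : brle cs x y) (h2 : brle cs y z) : brle cs x z :=
  Relation.ReflTransGen.trans h1 h2

private lemma brle_of_not_descent {v : W} {k : B} (h : ¬ cs.IsRightDescent v k) :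
    brle cs v (v * cs.simple k) := by
  apply Relation.ReflTransGen.single
  refine ⟨cs.simple k, cs.isReflection_simple k, rfl, ?_⟩
  have := cs.length_mul_simple_ne v k
  unfold CoxeterSystem.IsRightDescent at h
  omega

private lemma brle_of_descent {v : W} {k : B} (h : cs.IsRightDescent v k) :
    brle cs (v * cs.simple k) v := by
  apply Relation.ReflTransGen.single
  refine ⟨cs.simple k, cs.isReflection_simple k, ?_, h⟩
  rw [cs.simple_mul_simple_cancel_right]

private lemma zplus {v : W} {k : B} (hv : ¬ cs.IsRightDescent v k) :
    ∀ {u : W}, brle cs u v → brle cs (u * cs.simple k) (v * cs.simple k) := by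
  intro u hu
  induction hu using Relation.ReflTransGen.head_induction_on with
  | refl => exact brle_refl cs _
  | head h hcv ih =>
    rename_i u c
    obtain ⟨t, ht, rfl, hlen⟩ := h
    set t' := cs.simple k * t * cs.simple k with ht'def
    have ht' : cs.IsReflection t' := by
      have := ht.conj (cs.simple k)
      rwa [cs.inv_simple] at this
    have heq : u * t * cs.simple k = (u * cs.simple k) * t' := by
      rw [ht'def]
      have := cs.simple_mul_simple_self k
      calc u * t * cs.simple k = u * (cs.simple k * cs.simple k) * t * cs.simple k := by
            rw [this]; group
        _ = u * cs.simple k * (cs.simple k * t * cs.simple k) := by group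
    rcases Nat.lt_or_ge (cs.length (u * cs.simple k)) (cs.length (u * t * cs.simple k))
      with hlt | hge
    · exact Relation.ReflTransGen.head ⟨t', ht', heq, hlt⟩ ih
    · have hne : cs.length (u * t * cs.simple k) ≠ cs.length (u * cs.simple k) := by
        rw [heq]
        exact ht'.length_mul_left_ne (u * cs.simple k)
      have hlt2 : cs.length (u * t * cs.simple k) < cs.length (u * cs.simple k) := by omega
      -- derive the length facts
      have h1 : cs.length (u * cs.simple k) = cs.length u + 1 ∧
          cs.length (u * t) = cs.length u + 1 ∧
          cs.length (u * t * cs.simple k) = cs.length u := by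
        rcases cs.length_mul_simple u k with e1 | e1 <;>
          rcases cs.length_mul_simple (u * t) k with e2 | e2 <;>
          constructor <;> omega
      obtain ⟨hu1, hc1, hck⟩ := h1
      obtain ⟨ρ', hρ'red, hρ'⟩ := cs.exists_reduced_word' (u * t * cs.simple k)
      have hρprod : cs.wordProd (ρ' ++ [k]) = u * t := by
        rw [cs.wordProd_append, cs.wordProd_singleton, ← hρ',
          cs.simple_mul_simple_cancel_right]
      have hρlen : (ρ' ++ [k]).length = cs.length u + 1 := by
        rw [List.length_append, List.length_singleton]
        have : cs.length (u * t * cs.simple k) = ρ'.length := hρ'red ▸ by rw [← hρ']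
        omega
      have hρred : cs.IsReduced (ρ' ++ [k]) := by
        show cs.length (cs.wordProd (ρ' ++ [k])) = _
        rw [hρprod, hρlen, hc1]
      have hut : cs.length (cs.wordProd (ρ' ++ [k]) * t) < cs.length (cs.wordProd (ρ' ++ [k])) := by
        rw [hρprod, mul_assoc, ht.mul_self, mul_one, hc1]
        omega
      obtain ⟨j, hj, hex⟩ := strong_exchange_right cs (ρ' ++ [k]) ht hut
      rw [hρprod, mul_assoc, ht.mul_self, mul_one] at hex
      -- hex : u = π ((ρ' ++ [k]).eraseIdx j)
      rcases Nat.lt_or_ge j ρ'.length with hjl | hjg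
      · -- impossible: u * s k would be too short
        exfalso
        rw [List.eraseIdx_append_of_lt_length hjl] at hex
        have : u * cs.simple k = cs.wordProd (ρ'.eraseIdx j) := by
          rw [hex, cs.wordProd_append, cs.wordProd_singleton,
            cs.simple_mul_simple_cancel_right]
        have hlenle : cs.length (u * cs.simple k) ≤ (ρ'.eraseIdx j).length := by
          rw [this]
          exact cs.length_wordProd_le _
        have e1 : (ρ'.eraseIdx j).length + 1 = ρ'.length :=
          List.length_eraseIdx_add_one hjl
        rw [List.length_append, List.length_singleton] at hρlen
        omega
      · -- the erased letter is the final k, so u = (u*t) * s k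
        have hjeq : j = ρ'.length := by
          rw [List.length_append, List.length_singleton] at hj
          omega
        rw [hjeq, List.eraseIdx_append_of_length_le le_rfl, Nat.sub_self] at hex
        simp only [List.eraseIdx_zero, List.tail_cons, List.append_nil] at hex
        -- hex : u = π ρ' = u * t * s k
        have : u * cs.simple k = u * t := by
          conv_lhs => rw [hex, ← hρ']
          rw [cs.simple_mul_simple_cancel_right]
        rw [this]
        exact brle_trans cs hcv (brle_of_not_descent cs hv)

private lemma sublist_brle : ∀ (ω σ : List B), cs.IsReduced ω → cs.IsReduced σ → σ.Sublist ω →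
    brle cs (cs.wordProd σ) (cs.wordProd ω) := by
  intro ω
  induction ω using List.reverseRecOn with
  | nil =>
    intro σ _ _ hσ
    rw [List.sublist_nil.mp hσ]
    exact brle_refl cs _
  | append_singleton ω₀ m ih =>
    intro σ hωred hσred hσ
    have hω₀red : cs.IsReduced ω₀ := by
      have := hωred.take ω₀.length
      rwa [List.take_left] at this
    have hω₀lt : ¬ cs.IsRightDescent (cs.wordProd ω₀) m := by
      intro hdesc
      unfold CoxeterSystem.IsRightDescent at hdesc
      rw [← cs.wordProd_singleton, ← cs.wordProd_append] at hdesc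
      have e1 : cs.length (cs.wordProd (ω₀ ++ [m])) = ω₀.length + 1 := by
        rw [hωred]
        simp
      have e2 : cs.length (cs.wordProd ω₀) = ω₀.length := hω₀red
      omega
    obtain ⟨l₁, l₂, rfl, hl₁, hl₂⟩ := List.sublist_append_iff.mp hσ
    rcases List.sublist_singleton.mp hl₂ with rfl | rfl
    · rw [List.append_nil] at hσred ⊢
      have h1 := ih l₁ hω₀red hσred hl₁
      refine brle_trans cs h1 ?_
      rw [cs.wordProd_append, cs.wordProd_singleton]
      exact brle_of_not_descent cs hω₀lt
    · have hl₁red : cs.IsReduced l₁ := by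
        have := hσred.take l₁.length
        rwa [List.take_left] at this
      have h1 := ih l₁ hω₀red hl₁red hl₁
      rw [cs.wordProd_append, cs.wordProd_append, cs.wordProd_singleton]
      exact zplus cs hω₀lt h1

private lemma upStep_subword {x y : W} (h : upStep cs x y) :
    ∀ ω : List B, cs.IsReduced ω → cs.wordProd ω = y →
    ∃ σ : List B, σ.Sublist ω ∧ cs.IsReduced σ ∧ cs.wordProd σ = x := by
  obtain ⟨t, ht, rfl, hlen⟩ := h
  intro ω hred hprod
  have hxt : cs.length (cs.wordProd ω * t) < cs.length (cs.wordProd ω) := by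
    rw [hprod, mul_assoc, ht.mul_self, mul_one]
    exact hlen
  obtain ⟨j, hj, hex⟩ := strong_exchange_right cs ω ht hxt
  rw [hprod, mul_assoc, ht.mul_self, mul_one] at hex
  obtain ⟨σ, hσ1, hσ2, hσ3⟩ := deletion cs (ω.eraseIdx j)
  exact ⟨σ, hσ1.trans (List.eraseIdx_sublist _ _), hσ2, by rw [hσ3, ← hex]⟩

private lemma brle_everyword {x y : W} (h : brle cs x y) :
    ∀ ω : List B, cs.IsReduced ω → cs.wordProd ω = y →
    ∃ σ : List B, σ.Sublist ω ∧ cs.IsReduced σ ∧ cs.wordProd σ = x := by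
  induction h using Relation.ReflTransGen.head_induction_on with
  | refl => exact fun ω hred hprod => ⟨ω, List.Sublist.refl _, hred, hprod⟩
  | head hstep _ ih =>
    intro ω hred hprod
    obtain ⟨σ₁, hσ₁sub, hσ₁red, hσ₁prod⟩ := ih ω hred hprod
    obtain ⟨σ, hσsub, hσred, hσprod⟩ := upStep_subword cs hstep σ₁ hσ₁red hσ₁prod
    exact ⟨σ, hσsub.trans hσ₁sub, hσred, hσprod⟩

private lemma bruhatLE_iff_brle {x y : W} : bruhatLE cs x y ↔ brle cs x y := by
  constructor
  · rintro ⟨ω, hred, hprod, ω', hsub, hred', hprod'⟩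
    rw [← hprod, ← hprod']
    exact sublist_brle cs ω ω' hred hred' hsub
  · intro h
    obtain ⟨ω, hred, hprod⟩ := cs.exists_reduced_word' y
    obtain ⟨σ, hsub, hσred, hσprod⟩ := brle_everyword cs h ω hred hprod.symm
    exact ⟨ω, hred, hprod.symm, σ, hsub, hσred, hσprod⟩

private lemma bruhatLE_lift_right {x y : W} {k : B} (hxy : bruhatLE cs x y)
    (hx : cs.IsRightDescent x k) (hy : cs.IsRightDescent y k) :
    bruhatLE cs (x * cs.simple k) (y * cs.simple k) := by
  rw [bruhatLE_iff_brle] at hxy ⊢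
  obtain ⟨ρ', hρ'red, hρ'⟩ := cs.exists_reduced_word' (y * cs.simple k)
  have hρprod : cs.wordProd (ρ' ++ [k]) = y := by
    rw [cs.wordProd_append, cs.wordProd_singleton, ← hρ', cs.simple_mul_simple_cancel_right]
  have hylen : cs.length (y * cs.simple k) + 1 = cs.length y := by
    unfold CoxeterSystem.IsRightDescent at hy
    rcases cs.length_mul_simple y k with e | e <;> omega
  have hρred : cs.IsReduced (ρ' ++ [k]) := by
    show cs.length (cs.wordProd (ρ' ++ [k])) = _
    rw [hρprod, List.length_append, List.length_singleton]
    have : cs.length (y * cs.simple k) = ρ'.length := hρ'red ▸ by rw [← hρ']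
    omega
  obtain ⟨σ, hσsub, hσred, hσprod⟩ := brle_everyword cs hxy (ρ' ++ [k]) hρred hρprod
  obtain ⟨l₁, l₂, rfl, hl₁, hl₂⟩ := List.sublist_append_iff.mp hσsub
  rcases List.sublist_singleton.mp hl₂ with rfl | rfl
  · rw [List.append_nil] at hσred hσprod
    have h1 : brle cs x (y * cs.simple k) := by
      rw [← hσprod, hρ']
      exact sublist_brle cs ρ' l₁ hρ'red hσred hl₁
    exact brle_trans cs (brle_of_descent cs hx) h1
  · have hl₁red : cs.IsReduced l₁ := by
      have := hσred.take l₁.length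
      rwa [List.take_left] at this
    have hxsk : x * cs.simple k = cs.wordProd l₁ := by
      rw [← hσprod, cs.wordProd_append, cs.wordProd_singleton,
        cs.simple_mul_simple_cancel_right]
    rw [hxsk, hρ']
    exact sublist_brle cs ρ' l₁ hρ'red hl₁red hl₁

private lemma bruhatLE_inv {x y : W} (hxy : bruhatLE cs x y) : bruhatLE cs x⁻¹ y⁻¹ := by
  obtain ⟨ω, hred, hprod, ω', hsub, hred', hprod'⟩ := hxy
  refine ⟨ω.reverse, ?_, ?_, ω'.reverse, hsub.reverse, ?_, ?_⟩
  · rwa [cs.isReduced_reverse_iff]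
  · rw [cs.wordProd_reverse, hprod]
  · rwa [cs.isReduced_reverse_iff]
  · rw [cs.wordProd_reverse, hprod']

private lemma bruhatLE_lift_left {x y : W} {k : B} (hxy : bruhatLE cs x y)
    (hx : cs.IsLeftDescent x k) (hy : cs.IsLeftDescent y k) :
    bruhatLE cs (cs.simple k * x) (cs.simple k * y) := by
  have h1 := bruhatLE_lift_right cs (bruhatLE_inv cs hxy)
    (cs.isRightDescent_inv_iff.mpr hx) (cs.isRightDescent_inv_iff.mpr hy)
  have h2 := bruhatLE_inv cs h1
  rwa [mul_inv_rev, mul_inv_rev, inv_inv, inv_inv, cs.inv_simple] at h2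

end BruhatOrder

section Parabolic

variable {B W : Type*} [Group W] {M : CoxeterMatrix B} (cs : CoxeterSystem M W) (J : Set B)

private lemma word_mem_closure (l : List B) (hl : ∀ i ∈ l, i ∈ J) :
    cs.wordProd l ∈ Subgroup.closure (cs.simple '' J) := by
  induction l with
  | nil => rw [cs.wordProd_nil]; exact one_mem _
  | cons i l ih =>
    rw [cs.wordProd_cons]
    exact mul_mem (Subgroup.subset_closure ⟨i, hl i (List.mem_cons_self), rfl⟩)
      (ih fun i hi => hl i (List.mem_cons_of_mem _ hi))

private lemma closure_word {w : W} (hw : w ∈ Subgroup.closure (cs.simple '' J)) :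
    ∃ l : List B, (∀ i ∈ l, i ∈ J) ∧ cs.wordProd l = w := by
  induction hw using Subgroup.closure_induction with
  | mem x hx =>
    obtain ⟨i, hi, rfl⟩ := hx
    exact ⟨[i], by simpa using hi, cs.wordProd_singleton i⟩
  | one => exact ⟨[], by simp, cs.wordProd_nil⟩
  | mul x y hx hy ihx ihy =>
    obtain ⟨l₁, h₁, rfl⟩ := ihx
    obtain ⟨l₂, h₂, rfl⟩ := ihy
    refine ⟨l₁ ++ l₂, ?_, cs.wordProd_append l₁ l₂⟩
    intro i hi
    rcases List.mem_append.mp hi with h | h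
    · exact h₁ i h
    · exact h₂ i h
  | inv x hx ihx =>
    obtain ⟨l, h, rfl⟩ := ihx
    refine ⟨l.reverse, ?_, cs.wordProd_reverse l⟩
    intro i hi
    exact h i (List.mem_reverse.mp hi)

private lemma closure_reduced_word {w : W} (hw : w ∈ Subgroup.closure (cs.simple '' J)) :
    ∃ l : List B, (∀ i ∈ l, i ∈ J) ∧ cs.IsReduced l ∧ cs.wordProd l = w := by
  obtain ⟨l, hl, hprod⟩ := closure_word cs J hw
  obtain ⟨σ, hsub, hred, hσprod⟩ := deletion cs l
  exact ⟨σ, fun i hi => hl i (hsub.subset hi), hred, by rw [hσprod, hprod]⟩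

/-- Length additivity over a minimal coset representative. -/
private lemma ad_min {z : W}
    (hz : ∀ w ∈ Subgroup.closure (cs.simple '' J), cs.length z ≤ cs.length (w * z)) :
    ∀ l : List B, (∀ i ∈ l, i ∈ J) → cs.IsReduced l →
    cs.length (cs.wordProd l * z) = l.length + cs.length z := by
  intro l
  induction l with
  | nil => simp
  | cons i l' ih =>
    intro hlJ hlred
    have hl'red : cs.IsReduced l' := by
      have := hlred.drop 1
      simpa using this
    have hIH := ih (fun i hi => hlJ i (List.mem_cons_of_mem _ hi)) hl'red
    have hprod : cs.wordProd (i :: l') * z = cs.simple i * (cs.wordProd l' * z) := by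
      rw [cs.wordProd_cons, mul_assoc]
    rw [hprod, List.length_cons]
    rcases cs.length_simple_mul (cs.wordProd l' * z) i with he | he
    · rw [he, hIH]
      omega
    · exfalso
      -- the descent case is impossible
      obtain ⟨ν, hνred, hνz⟩ := cs.exists_reduced_word' z
      have hνlen : ν.length = cs.length z := by
        rw [hνz]
        exact hνred.symm
      have hμprod : cs.wordProd (l' ++ ν) = cs.wordProd l' * z := by
        rw [cs.wordProd_append, ← hνz]
      have hμred : cs.IsReduced (l' ++ ν) := by
        show cs.length (cs.wordProd (l' ++ ν)) = _
        rw [hμprod, hIH, List.length_append, hνlen]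
      have hdesc : cs.length (cs.simple i * cs.wordProd (l' ++ ν))
          < cs.length (cs.wordProd (l' ++ ν)) := by
        rw [hμprod]
        omega
      obtain ⟨j, hj, hex⟩ := strong_exchange_left cs (l' ++ ν) (cs.isReflection_simple i) hdesc
      rcases Nat.lt_or_ge j l'.length with hjl | hjg
      · rw [List.eraseIdx_append_of_lt_length hjl, hμprod, cs.wordProd_append, ← hνz,
          ← mul_assoc] at hex
        have hcancel : cs.simple i * cs.wordProd l' = cs.wordProd (l'.eraseIdx j) :=
          mul_right_cancel hex
        have h1 : cs.length (cs.simple i * cs.wordProd l') = l'.length + 1 := by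
          rw [← cs.wordProd_cons]
          have h1' := hlred
          unfold CoxeterSystem.IsReduced at h1'
          rw [h1', List.length_cons]
        have h2 : cs.length (cs.wordProd (l'.eraseIdx j)) ≤ l'.length - 1 := by
          have e1 : (l'.eraseIdx j).length + 1 = l'.length := List.length_eraseIdx_add_one hjl
          have := cs.length_wordProd_le (l'.eraseIdx j)
          omega
        rw [hcancel] at h1
        omega
      · rw [List.eraseIdx_append_of_length_le hjg, hμprod, cs.wordProd_append] at hex
        set z' := cs.wordProd (ν.eraseIdx (j - l'.length)) with hz'
        have hj' : j - l'.length < ν.length := by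
          rw [List.length_append] at hj
          omega
        have hz'w : z' = ((cs.wordProd l')⁻¹ * cs.simple i * cs.wordProd l') * z := by
          have h0 : cs.wordProd l' * z' = cs.simple i * (cs.wordProd l' * z) := hex.symm
          calc z' = (cs.wordProd l')⁻¹ * (cs.wordProd l' * z') := by group
            _ = (cs.wordProd l')⁻¹ * (cs.simple i * (cs.wordProd l' * z)) := by rw [h0]
            _ = ((cs.wordProd l')⁻¹ * cs.simple i * cs.wordProd l') * z := by group
        have hl'mem := word_mem_closure cs J l' (fun x hx => hlJ x (List.mem_cons_of_mem _ hx))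
        have hwmem : (cs.wordProd l')⁻¹ * cs.simple i * cs.wordProd l'
            ∈ Subgroup.closure (cs.simple '' J) :=
          mul_mem (mul_mem (inv_mem hl'mem)
            (Subgroup.subset_closure ⟨i, hlJ i (List.mem_cons_self), rfl⟩)) hl'mem
        have hle := hz _ hwmem
        rw [← hz'w] at hle
        have hz'len : cs.length z' + 1 ≤ cs.length z := by
          have e1 : (ν.eraseIdx (j - l'.length)).length + 1 = ν.length :=
            List.length_eraseIdx_add_one hj'
          have h2 := cs.length_wordProd_le (ν.eraseIdx (j - l'.length))
          rw [← hz'] at h2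
          omega
        omega

private lemma cosetReps_min {u : W} (hu : u ∈ cosetReps cs J) :
    ∀ w ∈ Subgroup.closure (cs.simple '' J), cs.length u ≤ cs.length (w * u) := by
  classical
  have hPex : ∃ n, ∃ w, w ∈ Subgroup.closure (cs.simple '' J) ∧ cs.length (w * u) = n :=
    ⟨cs.length u, 1, one_mem _, by rw [one_mul]⟩
  obtain ⟨w₀, hw₀H, hw₀len⟩ := Nat.find_spec hPex
  have hz : ∀ w ∈ Subgroup.closure (cs.simple '' J),
      cs.length (w₀ * u) ≤ cs.length (w * (w₀ * u)) := by
    intro w hw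
    have h1 : Nat.find hPex ≤ cs.length ((w * w₀) * u) :=
      Nat.find_min' hPex ⟨w * w₀, mul_mem hw hw₀H, rfl⟩
    rw [← mul_assoc]
    omega
  obtain ⟨l, hlJ, hlred, hlprod⟩ := closure_reduced_word cs J (inv_mem hw₀H)
  have huz : u = cs.wordProd l * (w₀ * u) := by
    rw [hlprod]
    group
  rcases l with _ | ⟨i, l'⟩
  · intro w hw
    have hu_eq : u = w₀ * u := by
      conv_lhs => rw [huz]
      rw [cs.wordProd_nil, one_mul]
    have h := hz w hw
    rw [← hu_eq] at h
    exact h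
  · exfalso
    have hl'J : ∀ x ∈ l', x ∈ J := fun x hx => hlJ x (List.mem_cons_of_mem _ hx)
    have hl'red : cs.IsReduced l' := by
      have := hlred.drop 1
      simpa using this
    have huz' : u = cs.simple i * (cs.wordProd l' * (w₀ * u)) := by
      conv_lhs => rw [huz]
      rw [cs.wordProd_cons, mul_assoc]
    have hiu : cs.simple i * u = cs.wordProd l' * (w₀ * u) := by
      conv_lhs => rw [huz']
      rw [cs.simple_mul_simple_cancel_left]
    have h1 : cs.length u = (i :: l').length + cs.length (w₀ * u) := by
      conv_lhs => rw [huz]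
      exact ad_min cs J hz (i :: l') hlJ hlred
    have h2 : cs.length (cs.simple i * u) = l'.length + cs.length (w₀ * u) := by
      rw [hiu]
      exact ad_min cs J hz l' hl'J hl'red
    have h3 := hu i (hlJ i (List.mem_cons_self))
    rw [List.length_cons] at h1
    omega

private lemma ad_rep {u : W} (hu : u ∈ cosetReps cs J) :
    ∀ l : List B, (∀ i ∈ l, i ∈ J) → cs.IsReduced l →
    cs.length (cs.wordProd l * u) = l.length + cs.length u :=
  ad_min cs J (cosetReps_min cs J hu)

end Parabolic

section Final

variable {B W : Type*} [Group W] {M : CoxeterMatrix B} (cs : CoxeterSystem M W) (J : Set B)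

private lemma backward_aux {u v : W} (hu : u ∈ cosetReps cs J) (hv : v ∈ cosetReps cs J) :
    ∀ l : List B, (∀ i ∈ l, i ∈ J) → cs.IsReduced l →
    bruhatLE cs (cs.wordProd l * u) (cs.wordProd l * v) → bruhatLE cs u v := by
  intro l
  induction l with
  | nil =>
    intro _ _ h
    simpa using h
  | cons i l' ih =>
    intro hlJ hlred h
    have hl'J : ∀ x ∈ l', x ∈ J := fun x hx => hlJ x (List.mem_cons_of_mem _ hx)
    have hl'red : cs.IsReduced l' := by
      have := hlred.drop 1
      simpa using this
    have e1 : cs.wordProd (i :: l') * u = cs.simple i * (cs.wordProd l' * u) := by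
      rw [cs.wordProd_cons, mul_assoc]
    have e2 : cs.wordProd (i :: l') * v = cs.simple i * (cs.wordProd l' * v) := by
      rw [cs.wordProd_cons, mul_assoc]
    rw [e1, e2] at h
    have hdx : cs.IsLeftDescent (cs.simple i * (cs.wordProd l' * u)) i := by
      unfold CoxeterSystem.IsLeftDescent
      rw [cs.simple_mul_simple_cancel_left]
      have a1 := ad_rep cs J hu l' hl'J hl'red
      have a2 := ad_rep cs J hu (i :: l') hlJ hlred
      rw [e1, List.length_cons] at a2
      omega
    have hdy : cs.IsLeftDescent (cs.simple i * (cs.wordProd l' * v)) i := by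
      unfold CoxeterSystem.IsLeftDescent
      rw [cs.simple_mul_simple_cancel_left]
      have a1 := ad_rep cs J hv l' hl'J hl'red
      have a2 := ad_rep cs J hv (i :: l') hlJ hlred
      rw [e2, List.length_cons] at a2
      omega
    have h2 := bruhatLE_lift_left cs h hdx hdy
    rw [cs.simple_mul_simple_cancel_left, cs.simple_mul_simple_cancel_left] at h2
    exact ih hl'J hl'red h2

end Final

/-- for a finite Coxeter system, `J ⊆ S` with `w_J` the longest
element of `W_J`, and `u, v ∈ ᴶW`: `u ≤ v` in Bruhat order iff `w_J u ≤ w_J v`. -/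
theorem stmt11 [Finite W] (cs : CoxeterSystem M W) (J : Set B)
    (wJ : W) (hwJmem : wJ ∈ Subgroup.closure (cs.simple '' J))
    (hwJlong : ∀ u ∈ Subgroup.closure (cs.simple '' J), cs.length u ≤ cs.length wJ)
    (u v : W) (hu : u ∈ cosetReps cs J) (hv : v ∈ cosetReps cs J) :
    bruhatLE cs u v ↔ bruhatLE cs (wJ * u) (wJ * v) := by
  obtain ⟨lw, hlJ, hlred, hlprod⟩ := closure_reduced_word cs J hwJmem
  constructor
  · rintro ⟨ω, hred, hprod, ω', hsub, hred', hprod'⟩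
    refine ⟨lw ++ ω, ?_, ?_, lw ++ ω', List.Sublist.append (List.Sublist.refl lw) hsub, ?_, ?_⟩
    · show cs.length (cs.wordProd (lw ++ ω)) = _
      rw [cs.wordProd_append, hprod, ad_rep cs J hv lw hlJ hlred, List.length_append]
      have hv' : cs.length v = ω.length := by
        rw [← hprod]
        exact hred
      omega
    · rw [cs.wordProd_append, hprod, hlprod]
    · show cs.length (cs.wordProd (lw ++ ω')) = _
      rw [cs.wordProd_append, hprod', ad_rep cs J hu lw hlJ hlred, List.length_append]
      have hu' : cs.length u = ω'.length := by
        rw [← hprod']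
        exact hred'
      omega
    · rw [cs.wordProd_append, hprod', hlprod]
  · intro h
    rw [← hlprod] at h
    exact backward_aux cs J hu hv lw hlJ hlred h
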